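/- arXiv:2412.10186 — 3 statements merged into one kernel-verified Lean document; each statement's English description precedes it below -/
import Mathlib

section
/- Big-M encoding of ReLU is exact: given bounds l ≤ x ≤ u with l < 0 < u, the set of (x, o) ∈ ℝ² satisfying o ≥ 0, o ≥ x, o ≤ x − l·(1 − a), o ≤ u·a for some binary a ∈ {0,1}, equals the graph {(x, max(0, x)) : l ≤ x ≤ u}. -/
/-- Exactness of the Big-M mixed-integer encoding of ReLU: for pre-activation
bounds `l < 0 < u`, the feasible set of the Big-M constraints equals the graph of
`x ↦ max 0 x` over `[l, u]`. -/
theorem bigM_relu_exact (l u : ℝ) (hl : l < 0) (hu : 0 < u) :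
    {p : ℝ × ℝ | l ≤ p.1 ∧ p.1 ≤ u ∧
      ∃ a : ℝ, (a = 0 ∨ a = 1) ∧
        0 ≤ p.2 ∧ p.1 ≤ p.2 ∧ p.2 ≤ p.1 - l * (1 - a) ∧ p.2 ≤ u * a}
    = {p : ℝ × ℝ | l ≤ p.1 ∧ p.1 ≤ u ∧ p.2 = max 0 p.1} := by
  ext ⟨x, o⟩
  simp only [Set.mem_setOf_eq]
  constructor
  · rintro ⟨h1, h2, a, (rfl | rfl), h3, h4, h5, h6⟩
    · refine ⟨h1, h2, ?_⟩
      have ho : o = 0 := le_antisymm (by linarith) h3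
      rw [ho, eq_comm, max_eq_left]; linarith
    · refine ⟨h1, h2, ?_⟩
      have ho : o = x := le_antisymm (by linarith) h4
      rw [ho, eq_comm, max_eq_right]; linarith
  · rintro ⟨h1, h2, rfl⟩
    refine ⟨h1, h2, ?_⟩
    rcases le_or_gt x 0 with hx | hx
    · exact ⟨0, Or.inl rfl, le_max_left _ _, le_max_right _ _,
        by rw [max_eq_left hx]; nlinarith, by rw [max_eq_left hx]; nlinarith⟩
    · exact ⟨1, Or.inr rfl, le_max_left _ _, le_max_right _ _,
        by rw [max_eq_right hx.le]; nlinarith, by rw [max_eq_right hx.le]; nlinarith⟩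
end

section
/- On the interval [0,1], the sigmoid function σ(x) = 1/(1 + e^{−x}) satisfies 0.25x + 0.48 ≤ σ(x) ≤ 0.25x + 0.5. -/
/-- Validity of the linear relaxation of the sigmoid on `[0,1]`:
`0.25 x + 0.48 ≤ σ(x) ≤ 0.25 x + 0.5` where `σ(x) = 1 / (1 + e^{-x})`. -/
theorem sigmoid_linear_relaxation :
    ∀ x ∈ Set.Icc (0 : ℝ) 1,
      0.25 * x + 0.48 ≤ 1 / (1 + Real.exp (-x)) ∧
      1 / (1 + Real.exp (-x)) ≤ 0.25 * x + 0.5 := by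
  intro x hx
  obtain ⟨hx0, hx1⟩ := hx
  have hexpx : (0:ℝ) < Real.exp x := Real.exp_pos x
  have hden : (0:ℝ) < 1 + Real.exp (-x) := by positivity
  have hmul : Real.exp (-x) * Real.exp x = 1 := by
    rw [← Real.exp_add]; simp
  have hlow : 1 + x + x^2/2 + x^3/6 + x^4/24 ≤ Real.exp x := by
    have := Real.sum_le_exp_of_nonneg hx0 5
    simp [Finset.sum_range_succ, Nat.factorial] at this
    nlinarith [this]
  have hup : Real.exp x ≤ 1 + x + x^2/2 + x^3/6 + 5/96 * x^4 := by
    have := Real.exp_bound' hx0 hx1 (n := 4) (by norm_num)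
    simp [Finset.sum_range_succ, Nat.factorial] at this
    nlinarith [this]
  constructor
  · rw [le_div_iff₀ hden]
    have h1 : (0.25 * x + 0.48) * (1 + Real.exp (-x)) * Real.exp x
        = (0.25 * x + 0.48) * (Real.exp x + 1) := by
      linear_combination (0.25 * x + 0.48) * hmul
    have h2 : (0.25 * x + 0.48) * (Real.exp x + 1) ≤ Real.exp x := by
      nlinarith [hlow, mul_nonneg (mul_nonneg hx0 hx0) hx0,
        mul_nonneg (mul_nonneg (mul_nonneg hx0 hx0) hx0) hx0,
        mul_nonneg (mul_nonneg (mul_nonneg hx0 hx0) hx0) (sub_nonneg.2 hx1),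
        mul_nonneg (mul_nonneg (mul_nonneg (mul_nonneg hx0 hx0) hx0) hx0) (sub_nonneg.2 hx1),
        mul_nonneg (mul_nonneg hx0 hx0) (sub_nonneg.2 hx1)]
    nlinarith [h1, h2, hexpx]
  · rw [div_le_iff₀ hden]
    have h1 : (0.25 * x + 0.5) * (1 + Real.exp (-x)) * Real.exp x
        = (0.25 * x + 0.5) * (Real.exp x + 1) := by
      linear_combination (0.25 * x + 0.5) * hmul
    have h2 : Real.exp x ≤ (0.25 * x + 0.5) * (Real.exp x + 1) := by
      nlinarith [hup, mul_nonneg (mul_nonneg hx0 hx0) hx0,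
        mul_nonneg (mul_nonneg (mul_nonneg hx0 hx0) hx0) hx0,
        mul_nonneg (mul_nonneg (mul_nonneg (mul_nonneg hx0 hx0) hx0) hx0) hx0,
        mul_nonneg (mul_nonneg (mul_nonneg hx0 hx0) hx0) (sub_nonneg.2 hx1)]
    nlinarith [h1, h2, hexpx]
end

section
/- SOS/convex-hull encoding of ReLU: with pre-activation bounds l < 0 < u, the convex hull of the graph {(x, max(0,x)) : x ∈ [l,u]} is exactly the set {(x,o) : o ≥ 0, o ≥ x, o ≤ u(x − l)/(u − l), l ≤ x ≤ u}. -/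
/-- Convex-hull (triangle) encoding of ReLU: for bounds `l < 0 < u`, the convex
hull of the graph of `x ↦ max 0 x` over `[l, u]` is exactly the triangle
`{(x,o) : o ≥ 0, o ≥ x, o ≤ u(x - l)/(u - l), l ≤ x ≤ u}`. -/
theorem relu_convex_hull (l u : ℝ) (hl : l < 0) (hu : 0 < u) :
    convexHull ℝ {p : ℝ × ℝ | p.1 ∈ Set.Icc l u ∧ p.2 = max 0 p.1}
    = {p : ℝ × ℝ | 0 ≤ p.2 ∧ p.1 ≤ p.2 ∧ p.2 ≤ u * (p.1 - l) / (u - l) ∧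
        l ≤ p.1 ∧ p.1 ≤ u} := by
  have hul : (0:ℝ) < u - l := by linarith
  apply le_antisymm
  · apply convexHull_min
    · rintro ⟨x, o⟩ ⟨⟨hx1, hx2⟩, ho⟩
      simp only [Set.mem_setOf_eq] at *
      subst ho
      refine ⟨le_max_left _ _, le_max_right _ _, ?_, hx1, hx2⟩
      rw [le_div_iff₀ hul]
      rcases le_or_gt x 0 with h | h
      · rw [max_eq_left h]; nlinarith
      · rw [max_eq_right h.le]; nlinarith
    · rintro ⟨x1, o1⟩ ⟨h1, h2, h3, h4, h5⟩ ⟨x2, o2⟩ ⟨g1, g2, g3, g4, g5⟩ a b ha hb hab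
      rw [le_div_iff₀ hul] at h3 g3
      simp only [Set.mem_setOf_eq, Prod.smul_mk, Prod.mk_add_mk, smul_eq_mul] at *
      refine ⟨by nlinarith, by nlinarith, ?_, by nlinarith, by nlinarith⟩
      rw [le_div_iff₀ hul]
      have habul : (a + b) * (u * l) = u * l := by rw [hab]; ring
      nlinarith [mul_le_mul_of_nonneg_left h3 ha, mul_le_mul_of_nonneg_left g3 hb, habul]
  · rintro ⟨x, o⟩ ⟨h1, h2, h3, h4, h5⟩
    simp only [Set.mem_setOf_eq] at *
    rw [le_div_iff₀ hul] at h3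
    have hv1 : ((l, 0) : ℝ × ℝ) ∈ {p : ℝ × ℝ | p.1 ∈ Set.Icc l u ∧ p.2 = max 0 p.1} :=
      ⟨⟨le_refl l, by linarith⟩, by simp [max_eq_left hl.le]⟩
    have hv2 : ((0, 0) : ℝ × ℝ) ∈ {p : ℝ × ℝ | p.1 ∈ Set.Icc l u ∧ p.2 = max 0 p.1} :=
      ⟨⟨hl.le, hu.le⟩, by simp⟩
    have hv3 : ((u, u) : ℝ × ℝ) ∈ {p : ℝ × ℝ | p.1 ∈ Set.Icc l u ∧ p.2 = max 0 p.1} :=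
      ⟨⟨by linarith, le_refl u⟩, by simp [max_eq_right hu.le]⟩
    set w : Fin 3 → ℝ := ![u * (o - x), u * (x - l) - o * (u - l), (-l) * o] with hw
    set z : Fin 3 → ℝ × ℝ := ![(l, 0), (0, 0), (u, u)] with hz
    have hw0 : ∀ i ∈ Finset.univ, 0 ≤ w i := by
      intro i _
      fin_cases i
      · show (0:ℝ) ≤ u * (o - x); nlinarith
      · show (0:ℝ) ≤ u * (x - l) - o * (u - l); nlinarith
      · show (0:ℝ) ≤ -l * o; nlinarith
    have hwsum : ∑ i, w i = -l * u := by
      simp [hw, Fin.sum_univ_three]; ring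
    have hpos : (0:ℝ) < ∑ i, w i := by rw [hwsum]; nlinarith
    have hmem := Finset.centerMass_mem_convexHull (z := z) Finset.univ hw0 hpos
      (fun i _ => by fin_cases i <;> [exact hv1; exact hv2; exact hv3])
    have hcm : Finset.univ.centerMass w z = (x, o) := by
      rw [Finset.centerMass, hwsum]
      simp only [hz, hw, Fin.sum_univ_three, Matrix.cons_val_zero, Matrix.cons_val_one,
        Matrix.head_cons, Matrix.cons_val_two, Matrix.tail_cons, Prod.smul_mk,
        smul_eq_mul, Prod.mk_add_mk, Prod.ext_iff]
      have hne : -l * u ≠ 0 := ne_of_gt (by nlinarith : (0:ℝ) < -l * u)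
      have hl0 : l ≠ 0 := hl.ne
      have hu0 : u ≠ 0 := hu.ne'
      constructor
      · field_simp
        ring
      · field_simp
        ring
    rwa [hcm] at hmem
end
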